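/- Let p be a prime, k ≥ 1, u ≥ 1, and v a positive integer divisible by lcm(p^{k−1}, u, 2) (and additionally by 4 if p = 2 and k = 2). Define α(n) = (ℓ_{p,k}(n!), ν_p(n!) mod u, n mod v). Then α satisfies: α(0) = (1, 0, 0), and for all n ≥ 0 and 0 ≤ i ≤ p − 1, if α(n) = (x, y, z), then α(pn + i) = (x · (pz + i)_p! mod p^k, (y + z) mod u, (pz + i) mod v). Consequently the infinite word α(0)α(1)α(2)⋯ is a fixed point of the p-uniform morphism ψ sending (x,y,z) to the concatenation over i = 0,…,p−1 of these images. -/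

import Mathlib

def lastDigits (b k m : ℕ) : ℕ := (m / b ^ padicValNat b m) % b ^ k

def gaussFac (c n : ℕ) : ℕ := ∏ m ∈ (Finset.Icc 1 n).filter (fun m => Nat.Coprime c m), m

/-!
Since `i < p`, the multiples of `p` up to `p n + i` contribute `p ^ n * n!`, so
`(p n + i)! = p ^ n * n! * (p n + i)_p!`: the valuation grows by `n` and the `p`-free part is
multiplied by a Gauss factorial. It remains to see that `(p n + i)_p! mod p ^ k` only depends on
`n mod v`. For `q = p ^ k` and `ε = q_p!` one has `(q t + b)_p! ≡ ε ^ t * b_p! (mod q)`, so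
this reduces to `ε ^ (v / p ^ (k - 1)) ≡ 1`. As `ε` is the product of all units of `ZMod q`,
`ε ^ 2 = 1`; for `p = 2`, `k ≥ 3` even `ε = 1`, by induction from
`(2 ^ (k + 1))_2! ≡ ((2 ^ k)_2!) ^ 2 (mod 2 ^ (k + 1))`. The divisibility conditions on `v` make
`v / p ^ (k - 1)` even in all other cases.
-/

open Nat

@[simp]
lemma gaussFac_zero (c : ℕ) : gaussFac c 0 = 1 := rfl

lemma gaussFac_succ (c n : ℕ) :
    gaussFac c (n + 1) = if c.Coprime (n + 1) then gaussFac c n * (n + 1) else gaussFac c n := by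
  simp only [gaussFac, Finset.prod_filter]
  rw [Finset.prod_Icc_succ_top (by omega)]
  split_ifs <;> simp

lemma coprime_gaussFac (c n : ℕ) : c.Coprime (gaussFac c n) :=
  Nat.Coprime.prod_right fun _ hm => (Finset.mem_filter.mp hm).2

lemma factorial_eq_pow_mul_factorial_mul_gaussFac {p : ℕ} (hp : p.Prime) (n : ℕ) :
    n ! = p ^ (n / p) * ((n / p)! * gaussFac p n) := by
  induction n with
  | zero => simp
  | succ n ih =>
    rw [factorial_succ, ih, gaussFac_succ]
    by_cases h : p ∣ n + 1
    · have hn : n + 1 = p * (n / p + 1) := by rw [← succ_div_of_dvd h, Nat.mul_div_cancel' h]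
      rw [if_neg (hp.coprime_iff_not_dvd.not.mpr (not_not.mpr h)), succ_div_of_dvd h,
        factorial_succ, hn]
      ring
    · rw [if_pos (hp.coprime_iff_not_dvd.mpr h), succ_div_of_not_dvd h]
      ring

lemma ordCompl_factorial_mul_add {p : ℕ} (hp : p.Prime) (n : ℕ) {i : ℕ} (hi : i < p) :
    ordCompl[p] (p * n + i)! = ordCompl[p] n ! * gaussFac p (p * n + i) := by
  have hdiv : (p * n + i) / p = n := by
    rw [Nat.mul_add_div hp.pos, Nat.div_eq_of_lt hi, add_zero]
  have hG : ordCompl[p] (gaussFac p (p * n + i)) = gaussFac p (p * n + i) :=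
    (ordCompl_eq_self_iff_zero_or_not_dvd _ hp).mpr
      (Or.inr (hp.coprime_iff_not_dvd.mp (coprime_gaussFac _ _)))
  rw [factorial_eq_pow_mul_factorial_mul_gaussFac hp, hdiv, ordCompl_self_pow_mul _ _ hp,
    ordCompl_mul, hG]

lemma lastDigits_eq_ordCompl_mod {p : ℕ} (hp : p.Prime) (k m : ℕ) :
    lastDigits p k m = ordCompl[p] m % p ^ k := by
  rw [lastDigits, factorization_def m hp]

lemma lastDigits_factorial_mul_add {p : ℕ} (hp : p.Prime) (k n : ℕ) {i : ℕ} (hi : i < p) :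
    lastDigits p k (p * n + i)! = lastDigits p k n ! * gaussFac p (p * n + i) % p ^ k := by
  rw [lastDigits_eq_ordCompl_mod hp, lastDigits_eq_ordCompl_mod hp,
    ordCompl_factorial_mul_add hp n hi, Nat.mod_mul_mod]

lemma gaussFac_add_cast {c q : ℕ} (hcq : c ∣ q) (b : ℕ) :
    (gaussFac c (q + b) : ZMod q) = gaussFac c q * gaussFac c b := by
  obtain ⟨r, rfl⟩ := hcq
  induction b with
  | zero => simp
  | succ b ih =>
    have hcop : c.Coprime (c * r + b + 1) ↔ c.Coprime (b + 1) := by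
      rw [show c * r + b + 1 = b + 1 + c * r by ring, coprime_add_mul_left_right]
    rw [← add_assoc, gaussFac_succ, gaussFac_succ]
    by_cases h : c.Coprime (b + 1)
    · rw [if_pos (hcop.mpr h), if_pos h]
      have hq : ((c * r : ℕ) : ZMod (c * r)) = 0 := ZMod.natCast_self _
      push_cast at hq ⊢
      rw [ih]
      linear_combination (gaussFac c (c * r) * gaussFac c b : ZMod (c * r)) * hq
    · rw [if_neg (hcop.not.mpr h), if_neg h, ih]

lemma gaussFac_mul_add_cast {c q : ℕ} (hcq : c ∣ q) (t b : ℕ) :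
    (gaussFac c (q * t + b) : ZMod q) = (gaussFac c q : ZMod q) ^ t * gaussFac c b := by
  induction t with
  | zero => simp
  | succ t ih =>
    rw [show q * (t + 1) + b = q + (q * t + b) by ring, gaussFac_add_cast hcq, ih]
    ring

lemma prod_univ_sq_eq_one {G : Type*} [CommGroup G] [Fintype G] : (∏ x : G, x) ^ 2 = 1 := by
  have hinv : (∏ x : G, x)⁻¹ = ∏ x : G, x := by
    rw [← Finset.prod_inv_distrib]
    exact Fintype.prod_equiv (Equiv.inv G) _ _ fun _ => rfl
  rw [sq]
  nth_rw 2 [← hinv]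
  exact mul_inv_cancel _

lemma gaussFac_self_cast_eq_prod_units {n : ℕ} [NeZero n] (hn : 1 < n) :
    (gaussFac n n : ZMod n) = ∏ x : (ZMod n)ˣ, (x : ZMod n) := by
  have : Nontrivial (ZMod n) := ZMod.nontrivial_iff.mpr hn.ne'
  rw [gaussFac, Nat.cast_prod]
  symm
  refine Finset.prod_bij (fun a _ => (a : ZMod n).val) ?_ ?_ ?_ ?_
  · intro a _
    refine Finset.mem_filter.mpr ⟨Finset.mem_Icc.mpr ⟨?_, (ZMod.val_lt _).le⟩,
      (ZMod.val_coe_unit_coprime a).symm⟩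
    exact Nat.pos_of_ne_zero fun h => a.ne_zero ((ZMod.val_eq_zero _).mp h)
  · intro a _ b _ h
    exact Units.ext (ZMod.val_injective n h)
  · intro m hm
    obtain ⟨hmI, hcop⟩ := Finset.mem_filter.mp hm
    have hlt : m < n := lt_of_le_of_ne (Finset.mem_Icc.mp hmI).2 fun h => by
      subst h; exact (Nat.coprime_self m).not.mpr hn.ne' hcop
    exact ⟨ZMod.unitOfCoprime m hcop.symm, Finset.mem_univ _, by
      simp [ZMod.coe_unitOfCoprime, ZMod.val_cast_of_lt hlt]⟩
  · intro a _
    simp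

lemma gaussFac_self_cast_sq (n : ℕ) : (gaussFac n n : ZMod n) ^ 2 = 1 := by
  rcases lt_trichotomy n 1 with hn | rfl | hn
  · obtain rfl : n = 0 := by omega
    simp
  · exact Subsingleton.elim _ _
  · have : NeZero n := ⟨by omega⟩
    rw [gaussFac_self_cast_eq_prod_units hn, ← Units.coe_prod, ← Units.val_pow_eq_pow_val,
      prod_univ_sq_eq_one, Units.val_one]

lemma gaussFac_prime_pow_cast_sq {p k : ℕ} (hk : 1 ≤ k) :
    (gaussFac p (p ^ k) : ZMod (p ^ k)) ^ 2 = 1 := by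
  have h : gaussFac p (p ^ k) = gaussFac (p ^ k) (p ^ k) := by
    simp only [gaussFac, coprime_pow_left_iff (by omega : 0 < k)]
  rw [h, gaussFac_self_cast_sq]

lemma two_pow_mul_two_cast_eq_zero (k : ℕ) : (2 : ZMod (2 ^ (k + 1))) ^ k * 2 = 0 := by
  rw [← pow_succ]
  exact_mod_cast ZMod.natCast_self (2 ^ (k + 1))

lemma two_pow_sq_cast_eq_zero {k : ℕ} (hk : 1 ≤ k) :
    ((2 : ZMod (2 ^ (k + 1))) ^ k) ^ 2 = 0 := by
  obtain ⟨j, rfl⟩ : ∃ j, k = j + 1 := ⟨k - 1, by omega⟩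
  have hq : (2 : ZMod (2 ^ (j + 1 + 1))) ^ (j + 1 + 1) = 0 := by
    exact_mod_cast ZMod.natCast_self (2 ^ (j + 1 + 1))
  rw [← pow_mul, show (j + 1) * 2 = j + 1 + 1 + j by ring, pow_add (2 : ZMod (2 ^ (j + 1 + 1))),
    hq, zero_mul]

/-- For odd `m`, `2 ^ k + m ≡ m * (1 + 2 ^ k) (mod 2 ^ (k + 1))`. -/
lemma gaussFac_two_pow_add_cast {k : ℕ} (hk : 1 ≤ k) (b : ℕ) :
    (gaussFac 2 (2 ^ k + b) : ZMod (2 ^ (k + 1))) =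
      gaussFac 2 (2 ^ k) * gaussFac 2 b * (1 + 2 ^ k) ^ ((b + 1) / 2) := by
  obtain ⟨k, rfl⟩ : ∃ j, k = j + 1 := ⟨k - 1, by omega⟩
  have hzero := two_pow_mul_two_cast_eq_zero (k + 1)
  induction b with
  | zero => simp
  | succ b ih =>
    rw [← add_assoc, gaussFac_succ, gaussFac_succ]
    rcases Nat.even_or_odd' b with ⟨j, rfl | rfl⟩
    · have hodd : Odd (2 * j + 1) := ⟨j, rfl⟩
      have hodd' : Odd (2 ^ (k + 1) + 2 * j + 1) := ⟨2 ^ k + j, by ring⟩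
      rw [if_pos (coprime_two_left.mpr hodd'), if_pos (coprime_two_left.mpr hodd),
        show (2 * j + 1 + 1) / 2 = (2 * j + 1) / 2 + 1 by omega]
      push_cast
      rw [ih]
      linear_combination (gaussFac 2 (2 ^ (k + 1)) * gaussFac 2 (2 * j) * (1 + 2 ^ (k + 1)) ^
        ((2 * j + 1) / 2) * (-j) : ZMod (2 ^ (k + 1 + 1))) * hzero
    · have hev : ¬ Odd (2 * j + 1 + 1) := Nat.not_odd_iff_even.mpr ⟨j + 1, by ring⟩
      have hev' : ¬ Odd (2 ^ (k + 1) + (2 * j + 1) + 1) :=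
        Nat.not_odd_iff_even.mpr ⟨2 ^ k + j + 1, by ring⟩
      rw [if_neg (coprime_two_left.not.mpr hev'), if_neg (coprime_two_left.not.mpr hev), ih,
        show (2 * j + 1 + 1 + 1) / 2 = (2 * j + 1 + 1) / 2 by omega]

lemma gaussFac_two_pow_succ_cast {k : ℕ} (hk : 2 ≤ k) :
    (gaussFac 2 (2 ^ (k + 1)) : ZMod (2 ^ (k + 1))) =
      (gaussFac 2 (2 ^ k) : ZMod (2 ^ (k + 1))) ^ 2 := by
  obtain ⟨j, rfl⟩ : ∃ j, k = j + 2 := ⟨k - 2, by omega⟩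
  have hhalf : (2 ^ (j + 2) + 1) / 2 = 2 * 2 ^ j := by
    rw [show 2 ^ (j + 2) = 2 * (2 * 2 ^ j) by ring]
    omega
  have hunit : ((1 + 2 ^ (j + 2) : ZMod (2 ^ (j + 2 + 1)))) ^ 2 = 1 := by
    linear_combination two_pow_mul_two_cast_eq_zero (j + 2) +
      two_pow_sq_cast_eq_zero (k := j + 2) (by omega)
  have h := gaussFac_two_pow_add_cast (k := j + 2) (by omega) (2 ^ (j + 2))
  rw [← two_mul, ← _root_.pow_succ'] at h
  rw [h, hhalf, pow_mul, hunit, one_pow, mul_one, sq]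

lemma gaussFac_two_pow_cast_eq_one {k : ℕ} (hk : 3 ≤ k) :
    (gaussFac 2 (2 ^ k) : ZMod (2 ^ k)) = 1 := by
  induction k, hk using Nat.le_induction with
  | base => decide
  | succ k hk ih =>
    have hmod : gaussFac 2 (2 ^ k) % 2 ^ k = 1 := by
      rw [← Nat.mod_eq_of_lt (Nat.one_lt_two_pow (by omega : k ≠ 0)),
        ← ZMod.natCast_eq_natCast_iff']
      exact_mod_cast ih
    obtain ⟨t, hG⟩ : ∃ t, gaussFac 2 (2 ^ k) = 2 ^ k * t + 1 :=
      ⟨_, hmod ▸ (Nat.div_add_mod _ _).symm⟩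
    rw [gaussFac_two_pow_succ_cast (by omega), hG]
    push_cast
    linear_combination (t : ZMod (2 ^ (k + 1))) * two_pow_mul_two_cast_eq_zero k +
      (t : ZMod (2 ^ (k + 1))) ^ 2 * two_pow_sq_cast_eq_zero (k := k) (by omega)

lemma gaussFac_prime_pow_cast_pow_eq_one {p k s : ℕ} (hp : p.Prime) (hk : 1 ≤ k)
    (h2 : 2 ∣ p ^ (k - 1) * s) (h4 : p = 2 → k = 2 → 4 ∣ p ^ (k - 1) * s) :
    (gaussFac p (p ^ k) : ZMod (p ^ k)) ^ s = 1 := by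
  by_cases h23 : p = 2 ∧ 3 ≤ k
  · obtain ⟨rfl, hk3⟩ := h23
    rw [gaussFac_two_pow_cast_eq_one hk3, one_pow]
  obtain ⟨t, rfl⟩ : 2 ∣ s := by
    rcases hp.eq_two_or_odd' with rfl | hodd
    · obtain rfl | rfl : k = 1 ∨ k = 2 := by omega
      · simpa using h2
      · have := h4 rfl rfl
        omega
    · exact (coprime_two_left.mpr hodd.pow).dvd_of_dvd_mul_left h2
  rw [pow_mul, gaussFac_prime_pow_cast_sq hk, one_pow]

lemma gaussFac_mul_add_modEq {p k s : ℕ} (hk : 1 ≤ k)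
    (hs : (gaussFac p (p ^ k) : ZMod (p ^ k)) ^ s = 1) (n i : ℕ) :
    gaussFac p (p * n + i) ≡ gaussFac p (p * (n % (p ^ (k - 1) * s)) + i) [MOD p ^ k] := by
  set v := p ^ (k - 1) * s
  have hn : p * n + i = p ^ k * (s * (n / v)) + (p * (n % v) + i) := by
    conv_lhs => rw [← Nat.mod_add_div n v]
    rw [show p ^ k = p * p ^ (k - 1) by rw [← _root_.pow_succ']; congr; omega]
    ring
  rw [← ZMod.natCast_eq_natCast_iff, hn, gaussFac_mul_add_cast (dvd_pow_self p (by omega)),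
    pow_mul, hs, one_pow, one_mul]

theorem stmt_11_general (p k u v : ℕ) (hp : p.Prime) (hk : 1 ≤ k)
    (hdvd : Nat.lcm (Nat.lcm (p ^ (k - 1)) u) 2 ∣ v)
    (hdvd4 : p = 2 → k = 2 → 4 ∣ v)
    (α : ℕ → ℕ × ℕ × ℕ)
    (hα : ∀ n, α n = (lastDigits p k (Nat.factorial n),
      padicValNat p (Nat.factorial n) % u, n % v)) :
    α 0 = (1, 0, 0) ∧
      ∀ n : ℕ, ∀ i : ℕ, i ≤ p - 1 →
        α (p * n + i) =
          ((α n).1 * gaussFac p (p * (α n).2.2 + i) % p ^ k,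
            ((α n).2.1 + (α n).2.2) % u,
            (p * (α n).2.2 + i) % v) := by
  have : Fact p.Prime := ⟨hp⟩
  have huv : u ∣ v := ((Nat.dvd_lcm_right _ _).trans (Nat.dvd_lcm_left _ _)).trans hdvd
  have h2v : 2 ∣ v := (Nat.dvd_lcm_right _ _).trans hdvd
  obtain ⟨s, rfl⟩ : p ^ (k - 1) ∣ v :=
    ((Nat.dvd_lcm_left _ _).trans (Nat.dvd_lcm_left _ _)).trans hdvd
  have hG := gaussFac_mul_add_modEq hk (gaussFac_prime_pow_cast_pow_eq_one hp hk h2v hdvd4)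
  refine ⟨?_, fun n i hi => ?_⟩
  · have hpk : 1 < p ^ k := Nat.one_lt_pow (by omega) hp.one_lt
    simp [hα, lastDigits, Nat.mod_eq_of_lt hpk]
  have hi : i < p := by have := hp.two_le; omega
  simp only [hα, Prod.mk.injEq]
  refine ⟨?_, ?_, ?_⟩
  · rw [lastDigits_factorial_mul_add hp k n hi]
    exact (hG n i).mul_left _
  · rw [padicValNat_factorial_mul_add n hi, padicValNat_factorial_mul]
    exact ((Nat.mod_modEq _ u).add ((Nat.mod_modEq n _).of_dvd huv)).symm
  · exact (((Nat.mod_modEq n _).mul_left p).add_right i).symm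

theorem stmt_11 (p k u v : ℕ) (hp : p.Prime) (hk : 1 ≤ k) (hu : 1 ≤ u)
    (hv : 0 < v) (hdvd : Nat.lcm (Nat.lcm (p ^ (k - 1)) u) 2 ∣ v)
    (hdvd4 : p = 2 → k = 2 → 4 ∣ v)
    (α : ℕ → ℕ × ℕ × ℕ)
    (hα : ∀ n, α n = (lastDigits p k (Nat.factorial n),
      padicValNat p (Nat.factorial n) % u, n % v)) :
    α 0 = (1, 0, 0) ∧
      ∀ n : ℕ, ∀ i : ℕ, i ≤ p - 1 →
        α (p * n + i) =
          ((α n).1 * gaussFac p (p * (α n).2.2 + i) % p ^ k,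
            ((α n).2.1 + (α n).2.2) % u,
            (p * (α n).2.2 + i) % v) :=
  stmt_11_general p k u v hp hk hdvd hdvd4 α hα
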